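/- arXiv:2502.13870 — 5 statements merged into one kernel-verified Lean document; each statement's English description precedes it below -/
import Mathlib

section
/- (Fourier-to-Banzhaf) Let f : 2^{[n]} → ℝ with Fourier transform F, and define the Möbius coefficients I^M(S) = (-2)^{|S|} ∑_{T ⊇ S} F(T). Then the Banzhaf interaction index I^{BII}(S) = ∑_{T ⊇ S} (2^{|S|}/2^{|T|}) I^M(T) satisfies I^{BII}(S) = (-2)^{|S|} F(S) for every S ⊆ [n]. -/
open Finset

/-- The parity character indexed by subsets: `(-1)^{|S ∩ m|}`. -/
def sgn {n : ℕ} (S m : Finset (Fin n)) : ℝ := (-1) ^ (S ∩ m).card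

lemma inner_alt {n : ℕ} (S U : Finset (Fin n)) (hSU : S ⊆ U) :
    ∑ T ∈ Finset.univ.filter (fun T => S ⊆ T ∧ T ⊆ U), ((-1 : ℝ)) ^ T.card
      = (-1 : ℝ) ^ S.card * (if U = S then 1 else 0) := by
  have : ∑ T ∈ Finset.univ.filter (fun T => S ⊆ T ∧ T ⊆ U), ((-1 : ℝ)) ^ T.card
      = ∑ A ∈ (U \ S).powerset, (-1 : ℝ) ^ S.card * (-1 : ℝ) ^ A.card := by
    refine Finset.sum_nbij' (fun T => T \ S) (fun A => S ∪ A) ?_ ?_ ?_ ?_ ?_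
    · intro T hT
      simp only [mem_filter, mem_univ, true_and] at hT
      exact mem_powerset.2 (sdiff_subset_sdiff hT.2 le_rfl)
    · intro A hA
      simp only [mem_powerset] at hA
      simp only [mem_filter, mem_univ, true_and]
      exact ⟨subset_union_left, union_subset hSU (hA.trans sdiff_subset)⟩
    · intro T hT
      simp only [mem_filter, mem_univ, true_and] at hT
      exact union_sdiff_of_subset hT.1
    · intro A hA
      simp only [mem_powerset] at hA
      exact union_sdiff_cancel_left (disjoint_sdiff.mono_right hA)
    · intro T hT
      simp only [mem_filter, mem_univ, true_and] at hT
      rw [← pow_add]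
      congr 1
      have := Finset.card_sdiff_add_card_eq_card hT.1
      show T.card = S.card + (T \ S).card
      omega
  rw [this, ← Finset.mul_sum]
  congr 1
  have hz := Finset.sum_powerset_neg_one_pow_card (x := U \ S)
  have hcast : ∑ i ∈ (U \ S).powerset, ((-1 : ℝ)) ^ i.card
      = ((∑ m ∈ (U \ S).powerset, (-1 : ℤ) ^ m.card : ℤ) : ℝ) := by push_cast; rfl
  rw [hcast, hz]
  simp only [Finset.sdiff_eq_empty_iff_subset]
  by_cases h : U = S
  · simp [h]
  · simp only [h, if_false]
    rw [if_neg (fun h2 => h (h2.antisymm hSU))]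
    simp

/-- Fourier-to-Banzhaf: the Banzhaf interaction index equals `(-2)^{|S|} F(S)`. -/
theorem banzhaf_interaction_fourier {n : ℕ} (f F : Finset (Fin n) → ℝ)
    (hF : ∀ S, F S = (2 : ℝ)⁻¹ ^ n * ∑ m, sgn S m * f m)
    (IM IBII : Finset (Fin n) → ℝ)
    (hIM : ∀ S, IM S = (-2 : ℝ) ^ S.card *
      ∑ T ∈ Finset.univ.filter (fun T => S ⊆ T), F T)
    (hIBII : ∀ S, IBII S = ∑ T ∈ Finset.univ.filter (fun T => S ⊆ T),
      ((2 : ℝ) ^ S.card / (2 : ℝ) ^ T.card) * IM T) :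
    ∀ S, IBII S = (-2 : ℝ) ^ S.card * F S := by
  intro S
  rw [hIBII]
  have step1 : ∀ T ∈ Finset.univ.filter (fun T => S ⊆ T),
      ((2 : ℝ) ^ S.card / (2 : ℝ) ^ T.card) * IM T
        = ∑ U ∈ Finset.univ.filter (fun U => T ⊆ U),
            (2 : ℝ) ^ S.card * (-1 : ℝ) ^ T.card * F U := by
    intro T _
    have hc : (2 : ℝ) ^ S.card / (2 : ℝ) ^ T.card * (-2 : ℝ) ^ T.card
        = (2 : ℝ) ^ S.card * (-1 : ℝ) ^ T.card := by
      have h2 : (2 : ℝ) ^ T.card ≠ 0 := by positivity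
      rw [show ((-2 : ℝ)) ^ T.card = (-1 : ℝ) ^ T.card * 2 ^ T.card from neg_pow 2 T.card]
      field_simp
    rw [hIM, ← mul_assoc, hc, Finset.mul_sum]
  rw [Finset.sum_congr rfl step1]
  rw [Finset.sum_comm' (t' := Finset.univ.filter (fun U => S ⊆ U))
      (s' := fun U => Finset.univ.filter (fun T => S ⊆ T ∧ T ⊆ U))
      (by intro T U; simp only [Finset.mem_filter, Finset.mem_univ, true_and]
          exact ⟨fun ⟨h1, h2⟩ => ⟨⟨h1, h2⟩, h1.trans h2⟩, fun ⟨⟨h1, h2⟩, _⟩ => ⟨h1, h2⟩⟩)]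
  have step2 : ∀ U ∈ Finset.univ.filter (fun U => S ⊆ U),
      ∑ T ∈ Finset.univ.filter (fun T => S ⊆ T ∧ T ⊆ U),
          (2 : ℝ) ^ S.card * (-1 : ℝ) ^ T.card * F U
        = if U = S then (2 : ℝ) ^ S.card * (-1 : ℝ) ^ S.card * F U else 0 := by
    intro U hU
    simp only [Finset.mem_filter, Finset.mem_univ, true_and] at hU
    have : ∑ T ∈ Finset.univ.filter (fun T => S ⊆ T ∧ T ⊆ U),
        (2 : ℝ) ^ S.card * (-1 : ℝ) ^ T.card * F U
        = (2 : ℝ) ^ S.card * F U *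
            ∑ T ∈ Finset.univ.filter (fun T => S ⊆ T ∧ T ⊆ U), (-1 : ℝ) ^ T.card := by
      rw [Finset.mul_sum]; exact Finset.sum_congr rfl fun T _ => by ring
    rw [this, inner_alt S U hU]
    by_cases h : U = S <;> simp [h] <;> ring
  rw [Finset.sum_congr rfl step2, Finset.sum_ite_eq' _ S]
  have hS : S ∈ Finset.univ.filter (fun U => S ⊆ U) := by simp
  rw [if_pos hS, show ((-2 : ℝ)) ^ S.card = (-1 : ℝ) ^ S.card * 2 ^ S.card from neg_pow 2 S.card]
  ring
end

section
/- (Fourier-to-Shapley interaction) Let f : 2^{[n]} → ℝ with Fourier transform F and Möbius coefficients I^M(S) = (-2)^{|S|} ∑_{T ⊇ S} F(T). Then the Shapley interaction index I^{SII}(S) = ∑_{T ⊇ S} I^M(T)/(|T| - |S| + 1) satisfies I^{SII}(S) = (-2)^{|S|} ∑_{R ⊇ S, |R| ≡ |S| mod 2} F(R)/(|R| - |S| + 1). -/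
open Finset

lemma key (d : ℕ) :
    ∑ j ∈ Finset.range (d+1), (d.choose j : ℝ) * (-2)^j / (j+1)
      = (1 - (-1:ℝ)^(d+1)) / (2*(d+1)) := by
  have h1 : ∀ j ∈ Finset.range (d+1),
      (d.choose j : ℝ) * (-2)^j / (j+1)
        = ((d+1).choose (j+1) : ℝ) * (-2)^j / (d+1) := by
    intro j hj
    have hc : (d+1) * d.choose j = (d+1).choose (j+1) * (j+1) :=
      Nat.add_one_mul_choose_eq d j
    have hcr : ((d:ℝ)+1) * d.choose j = ((d+1).choose (j+1) : ℝ) * ((j:ℝ)+1) := by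
      exact_mod_cast hc
    have hj1 : ((j:ℝ)+1) ≠ 0 := by positivity
    have hd1 : ((d:ℝ)+1) ≠ 0 := by positivity
    rw [div_eq_div_iff hj1 hd1]
    linear_combination ((-2:ℝ)^j) * hcr
  rw [Finset.sum_congr rfl h1]
  have hB : ∑ k ∈ Finset.range (d+2), ((d+1).choose k : ℝ) * (-2)^k = (-1:ℝ)^(d+1) := by
    have := add_pow (-2 : ℝ) 1 (d+1)
    simp only [one_pow, mul_one] at this
    rw [show ((-2:ℝ)+1) = -1 by norm_num] at this
    rw [this]
    apply Finset.sum_congr rfl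
    intro k hk
    ring
  have hsplit : ∑ k ∈ Finset.range (d+2), ((d+1).choose k : ℝ) * (-2)^k
      = (∑ j ∈ Finset.range (d+1), ((d+1).choose (j+1) : ℝ) * (-2)^(j+1)) + 1 := by
    rw [Finset.sum_range_succ']
    norm_num
  have h2 : ∑ j ∈ Finset.range (d+1), ((d+1).choose (j+1) : ℝ) * (-2)^(j+1)
      = -2 * ∑ j ∈ Finset.range (d+1), ((d+1).choose (j+1) : ℝ) * (-2)^j := by
    rw [Finset.mul_sum]; apply Finset.sum_congr rfl; intro j hj; ring
  have h3 : ∑ j ∈ Finset.range (d+1), ((d+1).choose (j+1) : ℝ) * (-2)^j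
      = (1 - (-1:ℝ)^(d+1)) / 2 := by
    have := hB
    rw [hsplit, h2] at this
    linarith
  rw [← Finset.sum_div, h3]
  have hd1 : ((d:ℝ)+1) ≠ 0 := by positivity
  field_simp

lemma innerB {n : ℕ} (S R : Finset (Fin n)) (h : S ⊆ R) :
    ∑ T ∈ Finset.univ.filter (fun T => S ⊆ T ∧ T ⊆ R),
        (-2:ℝ)^T.card / ((T.card : ℝ) - (S.card : ℝ) + 1)
      = (-2:ℝ)^S.card *
        ((1 - (-1:ℝ)^((R.card - S.card)+1)) / (2*(((R.card - S.card : ℕ):ℝ)+1))) := by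
  set d := R.card - S.card with hd
  have hreindex :
      ∑ T ∈ Finset.univ.filter (fun T => S ⊆ T ∧ T ⊆ R),
        (-2:ℝ)^T.card / ((T.card:ℝ) - (S.card:ℝ) + 1)
      = ∑ U ∈ (R \ S).powerset, (-2:ℝ)^(S.card + U.card) / ((U.card:ℝ) + 1) := by
    apply Finset.sum_nbij' (fun T => T \ S) (fun U => S ∪ U)
    · intro T hT
      simp only [mem_filter, mem_univ, true_and] at hT
      simp only [mem_powerset]
      exact sdiff_subset_sdiff hT.2 (subset_refl S)
    · intro U hU
      simp only [mem_powerset] at hU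
      simp only [mem_filter, mem_univ, true_and]
      constructor
      · exact subset_union_left
      · exact union_subset h (hU.trans sdiff_subset)
    · intro T hT
      simp only [mem_filter, mem_univ, true_and] at hT
      exact union_sdiff_of_subset hT.1
    · intro U hU
      simp only [mem_powerset] at hU
      have hdisj : Disjoint S U := by
        refine Finset.disjoint_left.mpr ?_
        intro a haS haU
        exact (Finset.mem_sdiff.mp (hU haU)).2 haS
      rw [union_sdiff_cancel_left hdisj]
    · intro T hT
      simp only [mem_filter, mem_univ, true_and] at hT
      have hc : (T \ S).card + S.card = T.card := card_sdiff_add_card_eq_card hT.1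
      have hc2 : S.card + (T \ S).card = T.card := by omega
      rw [hc2]
      congr 1
      have : ((T \ S).card : ℝ) = (T.card : ℝ) - (S.card : ℝ) := by
        rw [← hc]; push_cast; ring
      rw [this]
  rw [hreindex, Finset.sum_powerset]
  have hcard : (R \ S).card = d := by rw [card_sdiff_of_subset h]
  have hstep : ∀ j ∈ Finset.range ((R\S).card + 1),
      ∑ U ∈ powersetCard j (R \ S), (-2:ℝ)^(S.card + U.card) / ((U.card:ℝ) + 1)
        = (d.choose j : ℝ) * ((-2:ℝ)^(S.card + j) / ((j:ℝ)+1)) := by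
    intro j hj
    have : ∀ U ∈ powersetCard j (R \ S),
        (-2:ℝ)^(S.card + U.card) / ((U.card:ℝ) + 1)
          = (-2:ℝ)^(S.card + j) / ((j:ℝ)+1) := by
      intro U hU
      rw [(mem_powersetCard.mp hU).2]
    rw [Finset.sum_congr rfl this, Finset.sum_const, card_powersetCard, hcard,
      nsmul_eq_mul]
  rw [Finset.sum_congr rfl hstep, hcard]
  have : ∀ j ∈ Finset.range (d+1),
      (d.choose j : ℝ) * ((-2:ℝ)^(S.card + j) / ((j:ℝ)+1))
        = (-2:ℝ)^S.card * ((d.choose j : ℝ) * (-2)^j / ((j:ℝ)+1)) := by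
    intro j hj
    rw [pow_add]; ring
  rw [Finset.sum_congr rfl this, ← Finset.mul_sum, key]
/-- Fourier-to-Shapley interaction index formula. -/
theorem shapley_interaction_fourier {n : ℕ} (f F : Finset (Fin n) → ℝ)
    (hF : ∀ S, F S = (2 : ℝ)⁻¹ ^ n * ∑ m, sgn S m * f m)
    (IM ISII : Finset (Fin n) → ℝ)
    (hIM : ∀ S, IM S = (-2 : ℝ) ^ S.card *
      ∑ T ∈ Finset.univ.filter (fun T => S ⊆ T), F T)
    (hISII : ∀ S, ISII S = ∑ T ∈ Finset.univ.filter (fun T => S ⊆ T),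
      IM T / (T.card - S.card + 1)) :
    ∀ S, ISII S = (-2 : ℝ) ^ S.card *
      ∑ R ∈ Finset.univ.filter (fun R => S ⊆ R ∧ R.card % 2 = S.card % 2),
        F R / (R.card - S.card + 1) := by
  intro S
  rw [hISII]
  have step1 : ∀ T ∈ Finset.univ.filter (fun T => S ⊆ T),
      IM T / ((T.card : ℝ) - (S.card : ℝ) + 1)
      = ∑ R ∈ Finset.univ.filter (fun R => T ⊆ R),
          (-2:ℝ)^T.card * F R / ((T.card : ℝ) - (S.card : ℝ) + 1) := by
    intro T hT
    rw [hIM, Finset.mul_sum, Finset.sum_div]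
  rw [Finset.sum_congr rfl step1]
  rw [Finset.sum_comm'
    (s := Finset.univ.filter (fun T => S ⊆ T))
    (t := fun T => Finset.univ.filter (fun R => T ⊆ R))
    (t' := Finset.univ.filter (fun R => S ⊆ R))
    (s' := fun R => Finset.univ.filter (fun T => S ⊆ T ∧ T ⊆ R))
    (by
      intro T R
      simp only [Finset.mem_filter, Finset.mem_univ, true_and]
      constructor
      · rintro ⟨h1, h2⟩; exact ⟨⟨h1, h2⟩, h1.trans h2⟩
      · rintro ⟨⟨h1, h2⟩, _⟩; exact ⟨h1, h2⟩)]
  have step2 : ∀ R ∈ Finset.univ.filter (fun R => S ⊆ R),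
      ∑ T ∈ Finset.univ.filter (fun T => S ⊆ T ∧ T ⊆ R),
          (-2:ℝ)^T.card * F R / ((T.card : ℝ) - (S.card : ℝ) + 1)
      = F R * ((-2:ℝ)^S.card *
          ((1 - (-1:ℝ)^((R.card - S.card)+1)) / (2*(((R.card - S.card : ℕ):ℝ)+1)))) := by
    intro R hR
    simp only [Finset.mem_filter, Finset.mem_univ, true_and] at hR
    rw [← innerB S R hR, Finset.mul_sum]
    apply Finset.sum_congr rfl
    intro T hT
    ring
  rw [Finset.sum_congr rfl step2]
  have hfilt : Finset.univ.filter (fun R => S ⊆ R ∧ R.card % 2 = S.card % 2)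
      = (Finset.univ.filter (fun R => S ⊆ R)).filter (fun R => R.card % 2 = S.card % 2) := by
    rw [Finset.filter_filter]
  conv_rhs => rw [hfilt, Finset.mul_sum, Finset.sum_filter]
  apply Finset.sum_congr rfl
  intro R hR
  simp only [Finset.mem_filter, Finset.mem_univ, true_and] at hR
  have hle : S.card ≤ R.card := Finset.card_le_card hR
  set d := R.card - S.card with hd
  have hcast : (R.card : ℝ) - (S.card : ℝ) = (d : ℝ) := by
    rw [hd, Nat.cast_sub hle]
  by_cases hp : R.card % 2 = S.card % 2
  · rw [if_pos hp]
    have hdeven : Even d := by rw [Nat.even_iff]; omega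
    have h1 : (-1:ℝ)^(d+1) = -1 := by
      rw [pow_succ, hdeven.neg_one_pow]; ring
    rw [h1, hcast]
    have hd1 : ((d:ℝ)+1) ≠ 0 := by positivity
    field_simp
    ring
  · rw [if_neg hp]
    have hdodd : Odd d := by rw [Nat.odd_iff]; omega
    have h1 : (-1:ℝ)^(d+1) = 1 := by
      rw [pow_succ, hdodd.neg_one_pow]; ring
    rw [h1]
    simp
end

section
/- The Shapley value of player i equals SV(i) = -2 ∑_{R ∋ i, |R| odd} F(R)/|R|, where F is the Fourier transform of the value function and SV(i) = I^{SII}({i}) = ∑_{T ∋ i} I^M(T)/|T| with Möbius coefficients I^M(S) = (-2)^{|S|} ∑_{T ⊇ S} F(T). -/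
/-!
Substituting `I^M` and exchanging the two sums gives
`SV(i) = ∑_R F(R) ∑_{i ∈ T ⊆ R} (-2)^{|T|} / |T|`. The inner sum only depends on
`|R| = m + 1`: it is `∑_k C(m, k) (-2)^{k+1} / (k + 1) = ((1 - 2)^{m+1} - 1) / (m + 1)`,
which is `-2 / |R|` for odd `|R|` and `0` for even `|R|`.
-/

open Finset

theorem Finset.sum_powerset_insert_filter_mem_apply_card {α M : Type*} [DecidableEq α]
    [AddCommMonoid M] {s : Finset α} {a : α} (ha : a ∉ s) (g : ℕ → M) :
    ∑ t ∈ (insert a s).powerset with a ∈ t, g #t =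
      ∑ k ∈ range (#s + 1), (#s).choose k • g (k + 1) := by
  have hout : ∀ t ∈ s.powerset, a ∉ t := fun t ht hat => ha (mem_powerset.1 ht hat)
  rw [sum_filter, sum_powerset_insert ha, sum_eq_zero fun t ht => if_neg (hout t ht), zero_add,
    ← sum_powerset_apply_card fun k => g (k + 1)]
  exact sum_congr rfl fun t ht => by
    rw [if_pos (mem_insert_self a t), card_insert_of_notMem (hout t ht)]

/-- `∫₀ˣ (1 + y)ᵐ dy`, expanded by the binomial theorem. -/
theorem sum_range_choose_mul_pow_succ_div {K : Type*} [Field K] [CharZero K] (m : ℕ) (x : K) :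
    ∑ k ∈ range (m + 1), (m.choose k : K) * (x ^ (k + 1) / (k + 1)) =
      ((1 + x) ^ (m + 1) - 1) / (m + 1) := by
  have hterm : ∀ k ∈ range (m + 1), (m.choose k : K) * (x ^ (k + 1) / (k + 1)) =
      x ^ (k + 1) * ((m + 1).choose (k + 1) : K) / (m + 1) := by
    intro k _
    have hchoose : ((m + 1 : ℕ) : K) * m.choose k = (m + 1).choose (k + 1) * (k + 1 : ℕ) := by
      exact_mod_cast Nat.add_one_mul_choose_eq m k
    push_cast at hchoose
    field_simp
    linear_combination x ^ (k + 1) * hchoose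
  rw [sum_congr rfl hterm, ← sum_div, add_comm (1 : K), add_pow, sum_range_succ' _ (m + 1)]
  simp

theorem sum_powerset_filter_mem_neg_two_pow_div_card {α : Type*} [DecidableEq α]
    (R : Finset α) (a : α) :
    ∑ t ∈ R.powerset with a ∈ t, (-2 : ℝ) ^ #t / #t =
      if a ∈ R ∧ Odd #R then (-2 : ℝ) / #R else 0 := by
  by_cases haR : a ∈ R
  · obtain ⟨s, has, rfl⟩ : ∃ s, a ∉ s ∧ insert a s = R :=
      ⟨R.erase a, notMem_erase a R, insert_erase haR⟩
    rw [sum_powerset_insert_filter_mem_apply_card has fun k => (-2 : ℝ) ^ k / k,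
      card_insert_of_notMem has]
    simp only [nsmul_eq_mul, Nat.cast_add, Nat.cast_one, haR, true_and]
    rw [sum_range_choose_mul_pow_succ_div, show (1 : ℝ) + -2 = -1 by norm_num]
    rcases Nat.even_or_odd (#s + 1) with heven | hodd
    · rw [if_neg (Nat.not_odd_iff_even.2 heven), heven.neg_one_pow]
      norm_num
    · rw [if_pos hodd, hodd.neg_one_pow]
      norm_num
  · rw [if_neg (fun h => haR h.1)]
    refine sum_eq_zero fun t ht => absurd ?_ haR
    exact mem_powerset.1 (mem_filter.1 ht).1 (mem_filter.1 ht).2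

theorem shapley_value_fourier_general {n : ℕ} (F : Finset (Fin n) → ℝ)
    (IM : Finset (Fin n) → ℝ)
    (hIM : ∀ S, IM S = (-2 : ℝ) ^ S.card *
      ∑ T ∈ Finset.univ.filter (fun T => S ⊆ T), F T)
    (i : Fin n) (SV : ℝ)
    (hSV : SV = ∑ T ∈ Finset.univ.filter (fun T => i ∈ T), IM T / T.card) :
    SV = -2 * ∑ R ∈ Finset.univ.filter (fun R => i ∈ R ∧ Odd R.card),
      F R / R.card := by
  have hswap : ∑ T with i ∈ T, ∑ R with T ⊆ R, (-2 : ℝ) ^ #T / #T * F R =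
      ∑ R, ∑ T ∈ R.powerset with i ∈ T, (-2 : ℝ) ^ #T / #T * F R :=
    sum_comm' fun T R => by simp [and_comm]
  simp_rw [hSV, hIM, mul_sum, sum_div, mul_div_right_comm, hswap, ← sum_mul,
    sum_powerset_filter_mem_neg_two_pow_div_card, ite_mul, zero_mul, ← sum_filter]
  exact sum_congr rfl fun R _ => by ring

/-- The Shapley value of player `i` in terms of Fourier coefficients. -/
theorem shapley_value_fourier {n : ℕ} (f F : Finset (Fin n) → ℝ)
    (hF : ∀ S, F S = (2 : ℝ)⁻¹ ^ n * ∑ m, sgn S m * f m)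
    (IM : Finset (Fin n) → ℝ)
    (hIM : ∀ S, IM S = (-2 : ℝ) ^ S.card *
      ∑ T ∈ Finset.univ.filter (fun T => S ⊆ T), F T)
    (i : Fin n) (SV : ℝ)
    (hSV : SV = ∑ T ∈ Finset.univ.filter (fun T => i ∈ T), IM T / T.card) :
    SV = -2 * ∑ R ∈ Finset.univ.filter (fun R => i ∈ R ∧ Odd R.card),
      F R / R.card :=
  shapley_value_fourier_general F IM hIM i SV hSV
end

section
/- (Faith-Banzhaf truncation formula) Let f : 2^{[n]} → ℝ with Fourier transform F. The degree-ℓ Faith-Banzhaf interaction indices, defined as the coefficients I(T) (for |T| ≤ ℓ) minimizing ∑_{S ⊆ [n]} (f(S) - ∑_{T ⊆ S, |T| ≤ ℓ} I(T))², are given by I^{FBII}(S, ℓ) = (-2)^{|S|} ∑_{T ⊇ S, |T| ≤ ℓ} F(T). -/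
open Finset
open scoped symmDiff

lemma sumPowCard {α : Type*} [DecidableEq α] (A : Finset α) (x : ℝ) :
    ∑ T ∈ A.powerset, x ^ T.card = (1 + x) ^ A.card := by
  have h := Finset.prod_add (fun _ : α => x) (fun _ => 1) A
  simp only [Finset.prod_const, one_pow, mul_one] at h
  rw [add_comm x 1] at h
  rw [← h]

lemma negOnePowMul {α : Type*} [DecidableEq α] (a b : Finset α) :
    (-1 : ℝ) ^ a.card * (-1) ^ b.card = (-1) ^ (a ∆ b).card := by
  have h1 : (a ∆ b).card = (a \ b).card + (b \ a).card := by
    rw [symmDiff_def]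
    exact Finset.card_union_of_disjoint disjoint_sdiff_sdiff
  have h2 := Finset.card_inter_add_card_sdiff a b
  have h3 := Finset.card_inter_add_card_sdiff b a
  have h4 : a.card + b.card = (a ∆ b).card + 2 * (a ∩ b).card := by
    rw [Finset.inter_comm b a] at h3; omega
  rw [← pow_add, h4, pow_add, pow_mul]
  norm_num

lemma sumNegOnePow {n : ℕ} (A : Finset (Fin n)) :
    ∑ m : Finset (Fin n), (-1 : ℝ) ^ (A ∩ m).card
      = if A = ∅ then 2 ^ n else 0 := by
  split_ifs with h
  · subst h
    simp [Fintype.card_finset]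
  · obtain ⟨a, ha⟩ := Finset.nonempty_iff_ne_empty.2 h
    apply Finset.sum_ninvolution (fun m => if a ∈ m then m.erase a else insert a m)
    · intro m
      by_cases hm : a ∈ m
      · simp only [hm, if_pos]
        have he : A ∩ m = insert a (A ∩ m.erase a) := by
          rw [Finset.inter_erase, Finset.insert_erase (Finset.mem_inter.2 ⟨ha, hm⟩)]
        rw [he, Finset.card_insert_of_notMem (by simp), pow_succ]
        ring
      · simp only [hm, if_neg, not_false_iff]
        have he : A ∩ insert a m = insert a (A ∩ m) := by
          rw [Finset.inter_insert_of_mem ha]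
        rw [he, Finset.card_insert_of_notMem (by simp [hm]), pow_succ]
        ring
    · intro m _
      by_cases hm : a ∈ m
      · simp only [hm, if_pos]
        intro hc; exact (hc ▸ Finset.notMem_erase a m) hm
      · simp only [hm, if_neg, not_false_iff]
        intro hc; exact hm (hc ▸ Finset.mem_insert_self a m)
    · intro m; exact Finset.mem_univ _
    · intro m
      by_cases hm : a ∈ m
      · simp [hm, Finset.notMem_erase, Finset.insert_erase hm]
      · simp [hm, Finset.erase_insert hm]

lemma sgnOrtho {n : ℕ} (U V : Finset (Fin n)) :
    ∑ m : Finset (Fin n), sgn U m * sgn V m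
      = if U = V then (2 : ℝ) ^ n else 0 := by
  have key : ∀ m : Finset (Fin n), sgn U m * sgn V m
      = (-1 : ℝ) ^ ((U ∆ V) ∩ m).card := by
    intro m
    have hd := inf_symmDiff_distrib_right U V m
    simp only [Finset.inf_eq_inter] at hd
    rw [sgn, sgn, negOnePowMul, hd]
  simp_rw [key]
  rw [sumNegOnePow]
  congr 1
  simp [symmDiff_eq_empty]

/-- indicator identity -/
lemma indId {n : ℕ} (T S : Finset (Fin n)) :
    ∑ U ∈ T.powerset, (-1 : ℝ) ^ U.card * sgn U S
      = if T ⊆ S then 2 ^ T.card else 0 := by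
  have h := Finset.prod_add (fun i : Fin n => if i ∈ S then (1 : ℝ) else -1)
    (fun _ => 1) T
  simp only [Finset.prod_const, one_pow, mul_one] at h
  have hR : ∑ U ∈ T.powerset, (∏ i ∈ U, (if i ∈ S then (1 : ℝ) else -1))
      = ∑ U ∈ T.powerset, (-1 : ℝ) ^ U.card * sgn U S := by
    refine Finset.sum_congr rfl fun U _ => ?_
    rw [sgn, negOnePowMul]
    have hUS : U ∆ (U ∩ S) = U \ S := by
      ext i
      simp only [Finset.mem_symmDiff, Finset.mem_inter, Finset.mem_sdiff]
      tauto
    rw [hUS, Finset.prod_ite, Finset.prod_const, Finset.prod_const, one_pow,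
      one_mul]
    congr 2
    ext i; simp [Finset.mem_sdiff]
  rw [← hR, ← h]
  by_cases hTS : T ⊆ S
  · rw [if_pos hTS]
    calc ∏ i ∈ T, ((if i ∈ S then (1 : ℝ) else -1) + 1)
        = ∏ _i ∈ T, (2 : ℝ) :=
          Finset.prod_congr rfl fun i hi => by rw [if_pos (hTS hi)]; norm_num
      _ = 2 ^ T.card := Finset.prod_const 2
  · rw [if_neg hTS]
    obtain ⟨i, hiT, hiS⟩ : ∃ i ∈ T, i ∉ S := by
      by_contra hc; push_neg at hc; exact hTS hc
    exact Finset.prod_eq_zero hiT (by simp [hiS])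

/-- Faith-Banzhaf truncation formula: the degree-`ℓ` Faith-Banzhaf interaction
indices, i.e. the unique coefficients minimizing the regression objective, are
`I^{FBII}(S, ℓ) = (-2)^{|S|} ∑_{T ⊇ S, |T| ≤ ℓ} F(T)`. -/
theorem faith_banzhaf_truncation {n ℓ : ℕ} (f F : Finset (Fin n) → ℝ)
    (hF : ∀ S, F S = (2 : ℝ)⁻¹ ^ n * ∑ m, sgn S m * f m)
    (J : Finset (Fin n) → ℝ)
    (hJ : ∀ S, J S = (-2 : ℝ) ^ S.card *
      ∑ T ∈ Finset.univ.filter (fun T => S ⊆ T ∧ T.card ≤ ℓ), F T) :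
    ∀ I : Finset (Fin n) → ℝ,
      (∑ S, (f S - ∑ T ∈ S.powerset.filter (fun T => T.card ≤ ℓ), J T) ^ 2 ≤
        ∑ S, (f S - ∑ T ∈ S.powerset.filter (fun T => T.card ≤ ℓ), I T) ^ 2) ∧
      ((∑ S, (f S - ∑ T ∈ S.powerset.filter (fun T => T.card ≤ ℓ), I T) ^ 2 =
          ∑ S, (f S - ∑ T ∈ S.powerset.filter (fun T => T.card ≤ ℓ), J T) ^ 2) →
        ∀ T : Finset (Fin n), T.card ≤ ℓ → I T = J T) := by
  classical
  -- the low-degree predictor built from coefficients K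
  set g : (Finset (Fin n) → ℝ) → Finset (Fin n) → ℝ :=
    fun K S => ∑ T ∈ S.powerset.filter (fun T => T.card ≤ ℓ), K T with hg
  -- ∑_m sgn U m * f m = 2^n * F U
  have hFf : ∀ U : Finset (Fin n), ∑ m, sgn U m * f m = 2 ^ n * F U := by
    intro U
    rw [hF U, ← mul_assoc, ← mul_pow]
    norm_num
  -- Step A: g J S is the truncated Fourier expansion
  have hgJ : ∀ S, g J S =
      ∑ V ∈ Finset.univ.filter (fun V => V.card ≤ ℓ), F V * sgn V S := by
    intro S
    simp only [hg]
    calc ∑ T ∈ S.powerset.filter (fun T => T.card ≤ ℓ), J T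
        = ∑ T ∈ S.powerset.filter (fun T => T.card ≤ ℓ),
            ∑ V ∈ Finset.univ.filter (fun V => T ⊆ V ∧ V.card ≤ ℓ),
              (-2 : ℝ) ^ T.card * F V := by
          refine Finset.sum_congr rfl fun T _ => ?_
          rw [hJ T, Finset.mul_sum]
      _ = ∑ V ∈ Finset.univ.filter (fun V => V.card ≤ ℓ),
            ∑ T ∈ (S ∩ V).powerset, (-2 : ℝ) ^ T.card * F V := by
          refine Finset.sum_comm' ?_
          intro A B
          simp only [Finset.mem_filter, Finset.mem_powerset, Finset.mem_univ,
            true_and, Finset.subset_inter_iff]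
          have hcard : A ⊆ B → B.card ≤ ℓ → A.card ≤ ℓ := fun h1 h2 =>
            le_trans (Finset.card_le_card h1) h2
          tauto
      _ = ∑ V ∈ Finset.univ.filter (fun V => V.card ≤ ℓ), F V * sgn V S := by
          refine Finset.sum_congr rfl fun V _ => ?_
          rw [← Finset.sum_mul, sumPowCard, sgn, Finset.inter_comm V S]
          norm_num
          ring
  -- Step B: residual is orthogonal to low-degree characters
  have hB : ∀ U : Finset (Fin n), U.card ≤ ℓ →
      ∑ S, sgn U S * (f S - g J S) = 0 := by
    intro U hU
    rw [Finset.sum_congr rfl (fun S _ => mul_sub (sgn U S) (f S) (g J S)),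
      Finset.sum_sub_distrib, hFf U]
    have : ∑ S, sgn U S * g J S = 2 ^ n * F U := by
      calc ∑ S, sgn U S * g J S
          = ∑ S, ∑ V ∈ Finset.univ.filter (fun V => V.card ≤ ℓ),
              F V * (sgn V S * sgn U S) := by
            refine Finset.sum_congr rfl fun S _ => ?_
            rw [hgJ S, Finset.mul_sum]
            refine Finset.sum_congr rfl fun V _ => by ring
        _ = ∑ V ∈ Finset.univ.filter (fun V => V.card ≤ ℓ),
              F V * ∑ S, sgn V S * sgn U S := by
            rw [Finset.sum_comm]
            exact Finset.sum_congr rfl fun V _ => (Finset.mul_sum ..).symm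
        _ = 2 ^ n * F U := by
            have hco : ∀ V ∈ Finset.univ.filter (fun V => V.card ≤ ℓ),
                F V * ∑ S, sgn V S * sgn U S
                  = if V = U then F V * 2 ^ n else 0 := by
              intro V _
              rw [sgnOrtho V U]
              split_ifs <;> simp
            rw [Finset.sum_congr rfl hco, Finset.sum_ite_eq']
            rw [if_pos (Finset.mem_filter.2 ⟨Finset.mem_univ U, hU⟩)]
            ring
    rw [this, sub_self]
  -- Step C: sums of residual over supersets of a small set vanish
  have hC : ∀ T : Finset (Fin n), T.card ≤ ℓ →
      ∑ S ∈ Finset.univ.filter (fun S => T ⊆ S), (f S - g J S) = 0 := by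
    intro T hT
    have h2 : (2 : ℝ) ^ T.card ≠ 0 := by positivity
    apply mul_left_cancel₀ h2
    rw [mul_zero, Finset.mul_sum]
    calc ∑ S ∈ Finset.univ.filter (fun S => T ⊆ S), (2:ℝ) ^ T.card * (f S - g J S)
        = ∑ S, (if T ⊆ S then (2:ℝ) ^ T.card else 0) * (f S - g J S) := by
          rw [Finset.sum_filter]
          refine Finset.sum_congr rfl fun S _ => ?_
          split_ifs <;> simp
      _ = ∑ S, ∑ U ∈ T.powerset, ((-1:ℝ) ^ U.card * (sgn U S * (f S - g J S))) := by
          refine Finset.sum_congr rfl fun S _ => ?_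
          rw [← indId T S, Finset.sum_mul]
          refine Finset.sum_congr rfl fun U _ => by ring
      _ = ∑ U ∈ T.powerset, (-1:ℝ) ^ U.card * ∑ S, sgn U S * (f S - g J S) := by
          rw [Finset.sum_comm]
          exact Finset.sum_congr rfl fun U _ => (Finset.mul_sum ..).symm
      _ = 0 := by
          refine Finset.sum_eq_zero fun U hU => ?_
          rw [hB U (le_trans (Finset.card_le_card (Finset.mem_powerset.1 hU)) hT),
            mul_zero]
  -- Step D: cross term vanishes for any coefficients c
  have hD : ∀ c : Finset (Fin n) → ℝ,
      ∑ S, (f S - g J S) * g c S = 0 := by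
    intro c
    calc ∑ S, (f S - g J S) * g c S
        = ∑ S, ∑ T ∈ S.powerset.filter (fun T => T.card ≤ ℓ),
            (f S - g J S) * c T := by
          exact Finset.sum_congr rfl fun S _ => Finset.mul_sum ..
      _ = ∑ T ∈ Finset.univ.filter (fun T => T.card ≤ ℓ),
            ∑ S ∈ Finset.univ.filter (fun S => T ⊆ S), (f S - g J S) * c T := by
          refine Finset.sum_comm' ?_
          intro S T
          simp only [Finset.mem_filter, Finset.mem_powerset, Finset.mem_univ,
            true_and]
          try tauto
      _ = 0 := by
          refine Finset.sum_eq_zero fun T hT => ?_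
          rw [← Finset.sum_mul, hC T (Finset.mem_filter.1 hT).2, zero_mul]
  intro I
  -- squared error decomposition
  have hdecomp : ∑ S, (f S - g I S) ^ 2
      = ∑ S, (f S - g J S) ^ 2 + ∑ S, (g J S - g I S) ^ 2 := by
    have hgsub : ∀ S, g J S - g I S = g (fun T => J T - I T) S := by
      intro S
      simp only [hg]
      rw [Finset.sum_sub_distrib]
    have cross := hD (fun T => J T - I T)
    simp_rw [← hgsub] at cross
    calc ∑ S, (f S - g I S) ^ 2
        = ∑ S, ((f S - g J S) ^ 2 + (g J S - g I S) ^ 2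
            + 2 * ((f S - g J S) * (g J S - g I S))) := by
          refine Finset.sum_congr rfl fun S _ => by ring
      _ = ∑ S, (f S - g J S) ^ 2 + ∑ S, (g J S - g I S) ^ 2
            + 2 * ∑ S, (f S - g J S) * (g J S - g I S) := by
          rw [Finset.sum_add_distrib, Finset.sum_add_distrib, ← Finset.mul_sum]
      _ = ∑ S, (f S - g J S) ^ 2 + ∑ S, (g J S - g I S) ^ 2 := by
          rw [cross, mul_zero, add_zero]
  constructor
  · rw [hdecomp]
    have : (0:ℝ) ≤ ∑ S, (g J S - g I S) ^ 2 :=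
      Finset.sum_nonneg fun S _ => sq_nonneg _
    linarith
  · intro heq
    have hzero : ∑ S, (g J S - g I S) ^ 2 = 0 := by
      rw [hdecomp] at heq; linarith
    have hpt : ∀ S, g I S = g J S := by
      intro S
      have := (Finset.sum_eq_zero_iff_of_nonneg
        (fun S _ => sq_nonneg (g J S - g I S))).1 hzero S (Finset.mem_univ S)
      have h0 : g J S - g I S = 0 := by
        exact pow_eq_zero_iff (by norm_num) |>.1 this
      linarith
    -- Möbius / strong induction
    intro T
    induction T using Finset.strongInduction with
    | _ T ih =>
      intro hT
      have hps : ∀ U ∈ T.powerset, U.card ≤ ℓ := fun U hU =>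
        le_trans (Finset.card_le_card (Finset.mem_powerset.1 hU)) hT
      have h1 : ∑ U ∈ T.powerset, I U = ∑ U ∈ T.powerset, J U := by
        have h := hpt T
        simp only [hg] at h
        rwa [Finset.filter_true_of_mem hps] at h
      have hmem : T ∈ T.powerset := Finset.mem_powerset_self T
      rw [← Finset.add_sum_erase _ I hmem, ← Finset.add_sum_erase _ J hmem] at h1
      have h2 : ∑ U ∈ T.powerset.erase T, I U = ∑ U ∈ T.powerset.erase T, J U := by
        refine Finset.sum_congr rfl fun U hU => ?_
        have hU' := Finset.mem_erase.1 hU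
        have hsub : U ⊂ T :=
          Finset.ssubset_iff_subset_ne.2 ⟨Finset.mem_powerset.1 hU'.2, hU'.1⟩
        exact ih U hsub (le_trans (le_of_lt (Finset.card_lt_card hsub)) hT)
      rw [h2] at h1
      exact add_right_cancel h1
end

section
/- (Shapley-Taylor top-order Fourier formula) Let f : 2^{[n]} → ℝ with Fourier transform F and Möbius coefficients I^M(S) = (-2)^{|S|} ∑_{T ⊇ S} F(T). For |S| = ℓ, the Shapley-Taylor index I^{STII}(S, ℓ) = ∑_{T ⊇ S} C(|T|, ℓ)^{-1} I^M(T) equals ∑_{T ⊇ S} F(T) · ∑_{k=ℓ}^{|T|} C(k, ℓ)^{-1} (-2)^k C(|T| - ℓ, k - ℓ). -/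
namespace Finset

variable {α M : Type*} [DecidableEq α] [AddCommMonoid M]

theorem sum_Icc_finset_apply_card {s t : Finset α} (h : s ⊆ t) (g : ℕ → M) :
    ∑ u ∈ Icc s t, g #u = ∑ k ∈ Icc #s #t, (#t - #s).choose (k - #s) • g k := by
  have hinj : Set.InjOn (s ∪ ·) (t \ s).powerset := fun a ha b hb hab => by
    have hda := disjoint_of_subset_left (mem_powerset.1 ha) sdiff_disjoint
    have hdb := disjoint_of_subset_left (mem_powerset.1 hb) sdiff_disjoint
    simpa [union_sdiff_cancel_left hda.symm, union_sdiff_cancel_left hdb.symm]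
      using congrArg (· \ s) hab
  have hcard : ∀ a ∈ (t \ s).powerset, g #(s ∪ a) = g (#s + #a) := fun a ha => by
    rw [card_union_of_disjoint (disjoint_of_subset_right (mem_powerset.1 ha) disjoint_sdiff)]
  rw [Icc_eq_image_powerset h, sum_image hinj, sum_congr rfl hcard,
    sum_powerset_apply_card (fun m => g (#s + m)), card_sdiff_of_subset h,
    ← Ico_add_one_right_eq_Icc, sum_Ico_eq_sum_range, Nat.sub_add_comm (card_le_card h)]
  simp

theorem sum_superset_sum_superset_comm [Fintype α] (s : Finset α)
    (h : Finset α → Finset α → M) :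
    ∑ t ∈ univ.filter (s ⊆ ·), ∑ u ∈ univ.filter (t ⊆ ·), h t u =
      ∑ u ∈ univ.filter (s ⊆ ·), ∑ t ∈ Icc s u, h t u :=
  sum_comm' fun t u => by
    simp only [mem_filter, mem_univ, true_and, mem_Icc]
    exact ⟨fun ⟨hst, htu⟩ => ⟨⟨hst, htu⟩, hst.trans htu⟩, fun ⟨h, _⟩ => h⟩

end Finset

theorem shapley_taylor_fourier_general {n ℓ : ℕ} (F : Finset (Fin n) → ℝ)
    (IM : Finset (Fin n) → ℝ)
    (hIM : ∀ S, IM S = (-2 : ℝ) ^ S.card *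
      ∑ T ∈ Finset.univ.filter (fun T => S ⊆ T), F T)
    (S : Finset (Fin n)) (hS : S.card = ℓ) :
    ∑ T ∈ Finset.univ.filter (fun T => S ⊆ T), (T.card.choose ℓ : ℝ)⁻¹ * IM T =
      ∑ T ∈ Finset.univ.filter (fun T => S ⊆ T), F T *
        ∑ k ∈ Finset.Icc ℓ T.card,
          (k.choose ℓ : ℝ)⁻¹ * (-2 : ℝ) ^ k * ((T.card - ℓ).choose (k - ℓ) : ℝ) := by
  simp only [hIM, Finset.mul_sum]
  rw [Finset.sum_superset_sum_superset_comm]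
  refine Finset.sum_congr rfl fun U hU => ?_
  rw [Finset.sum_Icc_finset_apply_card (Finset.mem_filter.1 hU).2
    (fun k => (k.choose ℓ : ℝ)⁻¹ * ((-2) ^ k * F U)), hS]
  refine Finset.sum_congr rfl fun k _ => ?_
  rw [nsmul_eq_mul]
  ring

/-- Shapley-Taylor top-order Fourier formula. -/
theorem shapley_taylor_fourier {n ℓ : ℕ} (f F : Finset (Fin n) → ℝ)
    (hF : ∀ S, F S = (2 : ℝ)⁻¹ ^ n * ∑ m, sgn S m * f m)
    (IM : Finset (Fin n) → ℝ)
    (hIM : ∀ S, IM S = (-2 : ℝ) ^ S.card *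
      ∑ T ∈ Finset.univ.filter (fun T => S ⊆ T), F T)
    (S : Finset (Fin n)) (hS : S.card = ℓ) :
    ∑ T ∈ Finset.univ.filter (fun T => S ⊆ T), (T.card.choose ℓ : ℝ)⁻¹ * IM T =
      ∑ T ∈ Finset.univ.filter (fun T => S ⊆ T), F T *
        ∑ k ∈ Finset.Icc ℓ T.card,
          (k.choose ℓ : ℝ)⁻¹ * (-2 : ℝ) ^ k * ((T.card - ℓ).choose (k - ℓ) : ℝ) :=
  shapley_taylor_fourier_general F IM hIM S hS
end
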